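/- Let V be a word consisting of r North steps and l South steps, and let H be a word consisting of r East steps and l West steps (i.e., the number of North steps equals the number of East steps and the number of South steps equals the number of West steps). Then the number of shuffles of V and H with even peak-count minus the number with odd peak-count equals the super Catalan number S(r, l) = (2r)!·(2l)! / (r!·l!·(r+l)!). -/

import Mathlib

inductive Step : Type
  | E | W | N | S
deriving DecidableEq, Repr

open Step

/-- A step is vertical (North or South). -/
def isVert : Step → Bool
  | N => true
  | S => true
  | _ => false

/-- A step is horizontal (East or West). -/
def isHoriz : Step → Bool
  | E => true
  | W => true
  | _ => false

/-- `σ` is a shuffle (interleaving) of the vertical path `V` and horizontal path `H`: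
its subsequence of vertical steps is `V` and its subsequence of horizontal steps is `H`. -/
def IsShuffle (V H σ : List Step) : Prop :=
  σ.filter isVert = V ∧ σ.filter isHoriz = H

/-- The list of adjacent pairs `(σ_i, σ_{i+1})` of a list. -/
def pairs (σ : List Step) : List (Step × Step) := σ.zip σ.tail

/-- Signed peak-count: (# of (N,W) adjacent pairs) − (# of (E,S) adjacent pairs). -/
def signedPeak (σ : List Step) : ℤ :=
  (((pairs σ).filter (fun p => decide (p.1 = N ∧ p.2 = W))).length : ℤ)
  - (((pairs σ).filter (fun p => decide (p.1 = E ∧ p.2 = S))).length : ℤ)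

/-- Peak-count: (# of (N,W) adjacent pairs) + (# of (E,S) adjacent pairs). -/
def peakCount (σ : List Step) : ℕ :=
  ((pairs σ).filter (fun p => decide (p.1 = N ∧ p.2 = W))).length
  + ((pairs σ).filter (fun p => decide (p.1 = E ∧ p.2 = S))).length

/-- Binomial coefficient with integer arguments, equal to 0 unless `0 ≤ b ≤ a`. -/
def zch (a b : ℤ) : ℕ := if 0 ≤ b ∧ b ≤ a then a.toNat.choose b.toNat else 0

/-!
Let `f V H = ∑ (-1) ^ peakCount σ` over the shuffles `σ` of `V` and `H`. Splitting by the first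
step of `σ` gives
`f (v :: V) (h :: H) = f V (h :: H) + f (v :: V) H - 2 [v h or h v is a peak] f V H`:
prepending a step changes the sign only when it creates a peak, and a step that ends a peak
starts none. Hence `f` depends only on the numbers `a, b, c, d` of `N, S, E, W` steps, and it
equals `(-1)^a [x^(a+b)] (1-x)^(a+c) (1+x)^(b+d)`, which satisfies the same recurrences and
boundary values. On the diagonal `a = c = r`, `b = d = l`, the identity
`(1+x)^2 - (1-x)^2 = 4x` gives `D (r+1) l + D r (l+1) = 4 D r l`, the recurrence of the super
Catalan numbers, and `D 0 l = C(2l, l)`.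
-/

section

open Polynomial

noncomputable def mixedPow (m n : ℕ) : ℤ[X] := (1 - X) ^ m * (1 + X) ^ n

lemma coeff_mixedPow_succ_left (m n k : ℕ) :
    (mixedPow (m + 1) n).coeff (k + 1) =
      (mixedPow m n).coeff (k + 1) - (mixedPow m n).coeff k := by
  rw [mixedPow, pow_succ', mul_assoc, sub_mul, one_mul, coeff_sub, coeff_X_mul, mixedPow]

lemma coeff_mixedPow_succ_right (m n k : ℕ) :
    (mixedPow m (n + 1)).coeff (k + 1) =
      (mixedPow m n).coeff (k + 1) + (mixedPow m n).coeff k := by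
  rw [mixedPow, pow_succ', mul_left_comm, add_mul, one_mul, coeff_add, coeff_X_mul, mixedPow]

lemma coeff_mixedPow_zero (m n : ℕ) : (mixedPow m n).coeff 0 = 1 := by
  simp [mixedPow, coeff_zero_eq_eval_zero]

lemma coeff_mixedPow_add (m n : ℕ) : (mixedPow m n).coeff (m + n) = (-1) ^ m := by
  have hm : ((1 - X : ℤ[X]) ^ m).coeff m = (-1) ^ m := by
    have h := coeff_pow_of_natDegree_le (m := m) (p := (1 - X : ℤ[X])) (n := 1)
      (by compute_degree!)
    rw [mul_one] at h
    simp [h, coeff_one]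
  have hn : ((1 + X : ℤ[X]) ^ n).coeff n = 1 := by simp [coeff_one_add_X_pow]
  rw [mixedPow, coeff_mul_add_eq_of_natDegree_le (by compute_degree!) (by compute_degree!), hm, hn,
    mul_one]

lemma coeff_mixedPow_zero_left (n k : ℕ) : (mixedPow 0 n).coeff k = n.choose k := by
  simp [mixedPow, coeff_one_add_X_pow]

lemma coeff_mixedPow_add_two_right_sub_add_two_left (m n k : ℕ) :
    (mixedPow m (n + 2)).coeff (k + 1) - (mixedPow (m + 2) n).coeff (k + 1) =
      4 * (mixedPow m n).coeff k := by
  have h : mixedPow m (n + 2) - mixedPow (m + 2) n = X * (4 * mixedPow m n) := by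
    simp only [mixedPow]; ring
  rw [← coeff_sub, h, coeff_X_mul, coeff_ofNat_mul]

noncomputable def signedCount (a b c d : ℕ) : ℤ :=
  (-1) ^ a * (mixedPow (a + c) (b + d)).coeff (a + b)

lemma signedCount_zero_zero_left (c d : ℕ) : signedCount 0 0 c d = 1 := by
  simp [signedCount, coeff_mixedPow_zero]

lemma signedCount_zero_zero_right (a b : ℕ) : signedCount a b 0 0 = 1 := by
  rw [signedCount, add_zero, add_zero, coeff_mixedPow_add, ← mul_pow]; simp

lemma signedCount_N_E (a b c d : ℕ) :
    signedCount (a + 1) b (c + 1) d = signedCount a b (c + 1) d + signedCount (a + 1) b c d := by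
  have := coeff_mixedPow_succ_left (a + c + 1) (b + d) (a + b)
  simp only [signedCount]
  rw [show a + 1 + (c + 1) = a + c + 1 + 1 by ring, show a + (c + 1) = a + c + 1 by ring,
    show a + 1 + c = a + c + 1 by ring, show a + 1 + b = a + b + 1 by ring]
  linear_combination (-1) ^ (a + 1) * this

lemma signedCount_N_W (a b c d : ℕ) :
    signedCount (a + 1) b c (d + 1) =
      signedCount a b c (d + 1) + signedCount (a + 1) b c d - 2 * signedCount a b c d := by
  have h1 := coeff_mixedPow_succ_left (a + c) (b + d + 1) (a + b)
  have h2 := coeff_mixedPow_succ_right (a + c) (b + d) (a + b)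
  have h3 := coeff_mixedPow_succ_left (a + c) (b + d) (a + b)
  simp only [signedCount]
  rw [show a + 1 + c = a + c + 1 by ring, show b + (d + 1) = b + d + 1 by ring,
    show a + 1 + b = a + b + 1 by ring]
  linear_combination (-1) ^ (a + 1) * (h1 + h2 - h3)

lemma signedCount_S_E (a b c d : ℕ) :
    signedCount a (b + 1) (c + 1) d =
      signedCount a b (c + 1) d + signedCount a (b + 1) c d - 2 * signedCount a b c d := by
  have h1 := coeff_mixedPow_succ_right (a + c + 1) (b + d) (a + b)
  have h2 := coeff_mixedPow_succ_left (a + c) (b + d) (a + b)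
  have h3 := coeff_mixedPow_succ_right (a + c) (b + d) (a + b)
  simp only [signedCount]
  rw [show a + (c + 1) = a + c + 1 by ring, show b + 1 + d = b + d + 1 by ring,
    show a + (b + 1) = a + b + 1 by ring]
  linear_combination (-1) ^ a * (h1 + h2 - h3)

lemma signedCount_S_W (a b c d : ℕ) :
    signedCount a (b + 1) c (d + 1) = signedCount a b c (d + 1) + signedCount a (b + 1) c d := by
  have := coeff_mixedPow_succ_right (a + c) (b + d + 1) (a + b)
  simp only [signedCount]
  rw [show b + 1 + (d + 1) = b + d + 1 + 1 by ring, show b + (d + 1) = b + d + 1 by ring,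
    show b + 1 + d = b + d + 1 by ring, show a + (b + 1) = a + b + 1 by ring]
  linear_combination (-1) ^ a * this

lemma signedCount_diag_succ_add_succ (r l : ℕ) :
    signedCount (r + 1) l (r + 1) l + signedCount r (l + 1) r (l + 1) =
      4 * signedCount r l r l := by
  have := coeff_mixedPow_add_two_right_sub_add_two_left (r + r) (l + l) (r + l)
  simp only [signedCount]
  rw [show r + 1 + (r + 1) = r + r + 2 by ring, show l + 1 + (l + 1) = l + l + 2 by ring,
    show r + 1 + l = r + l + 1 by ring, show r + (l + 1) = r + l + 1 by ring]
  linear_combination (-1) ^ r * this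

end

def superCatalan (r l : ℕ) : ℚ :=
  (2 * r).factorial * (2 * l).factorial / (r.factorial * l.factorial * (r + l).factorial)

lemma superCatalan_zero_left (l : ℕ) : superCatalan 0 l = (2 * l).choose l := by
  rw [superCatalan, Nat.cast_choose ℚ (by omega : l ≤ 2 * l), show 2 * l - l = l by omega]
  simp [mul_comm]

lemma superCatalan_succ_left_add_succ_right (r l : ℕ) :
    superCatalan (r + 1) l + superCatalan r (l + 1) = 4 * superCatalan r l := by
  simp only [superCatalan, show 2 * (r + 1) = 2 * r + 1 + 1 by ring,
    show 2 * (l + 1) = 2 * l + 1 + 1 by ring, show r + 1 + l = r + l + 1 by ring,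
    show r + (l + 1) = r + l + 1 by ring, Nat.factorial_succ]
  push_cast
  field_simp
  ring

lemma signedCount_diag (r l : ℕ) : (signedCount r l r l : ℚ) = superCatalan r l := by
  induction r generalizing l with
  | zero =>
    rw [superCatalan_zero_left, signedCount, coeff_mixedPow_zero_left]
    simp [two_mul]
  | succ r ih =>
    have h : (signedCount (r + 1) l (r + 1) l : ℚ) + signedCount r (l + 1) r (l + 1) =
        4 * signedCount r l r l := by
      exact_mod_cast signedCount_diag_succ_add_succ r l
    linarith [superCatalan_succ_left_add_succ_right r l, ih l, ih (l + 1)]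

def peakIndicator : Step → Step → ℕ
  | N, W => 1
  | E, S => 1
  | _, _ => 0

lemma peakIndicator_le_one (x y : Step) : peakIndicator x y ≤ 1 := by
  cases x <;> cases y <;> decide

lemma peakIndicator_eq_zero_of_isVert_eq {x y : Step} (h : isVert x = isVert y) :
    peakIndicator x y = 0 := by
  cases x <;> cases y <;> first | rfl | exact absurd h (by decide)

lemma peakIndicator_eq_zero_of_ne_zero {x y : Step} (h : peakIndicator x y ≠ 0) (z : Step) :
    peakIndicator y z = 0 := by
  cases x <;> cases y <;> cases z <;> first | rfl | exact absurd rfl h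

lemma peakCount_cons_cons (x y : Step) (σ : List Step) :
    peakCount (x :: y :: σ) = peakIndicator x y + peakCount (y :: σ) := by
  cases x <;> cases y <;> simp [peakCount, pairs, peakIndicator] <;> omega

lemma peakCount_cons_of_forall_peakIndicator_eq_zero {y : Step}
    (hy : ∀ z, peakIndicator y z = 0) (σ : List Step) :
    peakCount (y :: σ) = peakCount σ := by
  cases σ with
  | nil => rfl
  | cons z σ => rw [peakCount_cons_cons, hy, zero_add]

lemma peakCount_eq_zero_of_forall_isVert_eq {b : Bool} :
    ∀ {σ : List Step}, (∀ s ∈ σ, isVert s = b) → peakCount σ = 0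
  | [], _ => rfl
  | [_], _ => rfl
  | x :: y :: σ, h => by
    rw [peakCount_cons_cons, peakIndicator_eq_zero_of_isVert_eq (by simp_all),
      peakCount_eq_zero_of_forall_isVert_eq (σ := y :: σ) (fun s hs => h s (.tail _ hs))]

lemma neg_one_pow_peakCount_cons_cons (x y : Step) (σ : List Step) :
    (-1 : ℤ) ^ peakCount (x :: y :: σ) =
      (-1) ^ peakCount (y :: σ) - 2 * peakIndicator x y * (-1) ^ peakCount σ := by
  rw [peakCount_cons_cons]
  rcases Nat.le_one_iff_eq_zero_or_eq_one.mp (peakIndicator_le_one x y) with h | h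
  · simp [h]
  · have hy : ∀ z, peakIndicator y z = 0 :=
      peakIndicator_eq_zero_of_ne_zero (x := x) (by simp [h])
    rw [h, peakCount_cons_of_forall_peakIndicator_eq_zero hy]
    ring

section Shuffles

variable {α : Type*}

def shuffles : List α → List α → List (List α)
  | [], H => [H]
  | v :: V, [] => [v :: V]
  | v :: V, h :: H => (shuffles V (h :: H)).map (v :: ·) ++ (shuffles (v :: V) H).map (h :: ·)

@[simp] lemma shuffles_nil_left (H : List α) : shuffles [] H = [H] := by simp [shuffles]

@[simp] lemma shuffles_nil_right (V : List α) : shuffles V [] = [V] := by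
  cases V <;> simp [shuffles]

lemma shuffles_cons_cons (v h : α) (V H : List α) :
    shuffles (v :: V) (h :: H) =
      (shuffles V (h :: H)).map (v :: ·) ++ (shuffles (v :: V) H).map (h :: ·) := by
  simp [shuffles]

lemma nil_mem_shuffles_iff {V H : List α} : [] ∈ shuffles V H ↔ V = [] ∧ H = [] := by
  cases V <;> cases H <;> simp [shuffles_cons_cons]

lemma cons_mem_shuffles_iff {x : α} {σ V H : List α} :
    x :: σ ∈ shuffles V H ↔
      (∃ V', V = x :: V' ∧ σ ∈ shuffles V' H) ∨ (∃ H', H = x :: H' ∧ σ ∈ shuffles V H') := by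
  cases V <;> cases H <;> simp [shuffles_cons_cons, eq_comm, and_comm]

lemma mem_shuffles_iff {p : α → Bool} :
    ∀ {σ V H : List α}, (∀ v ∈ V, p v = true) → (∀ h ∈ H, p h = false) →
      (σ ∈ shuffles V H ↔ σ.filter p = V ∧ σ.filter (fun x => !p x) = H)
  | [], V, H, _, _ => by simp [nil_mem_shuffles_iff, eq_comm]
  | x :: σ, V, H, hV, hH => by
    rw [cons_mem_shuffles_iff]
    cases hx : p x
    · constructor
      · rintro (⟨V', rfl, -⟩ | ⟨H', rfl, hσ⟩)
        · simp [hV x (by simp)] at hx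
        · rw [mem_shuffles_iff hV (fun h hh => hH h (.tail _ hh))] at hσ
          simp [hx, hσ]
      · rintro ⟨h1, h2⟩
        simp only [List.filter_cons, hx] at h1 h2
        exact .inr ⟨_, h2.symm, (mem_shuffles_iff hV (by simp_all)).2 ⟨h1, rfl⟩⟩
    · constructor
      · rintro (⟨V', rfl, hσ⟩ | ⟨H', rfl, -⟩)
        · rw [mem_shuffles_iff (fun v hv => hV v (.tail _ hv)) hH] at hσ
          simp [hx, hσ]
        · simp [hH x (by simp)] at hx
      · rintro ⟨h1, h2⟩
        simp only [List.filter_cons, hx] at h1 h2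
        exact .inl ⟨_, h1.symm, (mem_shuffles_iff (by simp_all) hH).2 ⟨rfl, h2⟩⟩

lemma nodup_shuffles :
    ∀ {V H : List α}, (∀ v ∈ V, ∀ h ∈ H, v ≠ h) → (shuffles V H).Nodup
  | [], H, _ => by simp
  | v :: V, [], _ => by simp
  | v :: V, h :: H, hVH => by
    rw [shuffles_cons_cons]
    have hleft := nodup_shuffles fun a ha b hb => hVH a (.tail _ ha) b hb
    have hright := nodup_shuffles fun a ha b hb => hVH a ha b (.tail _ hb)
    refine (hleft.map List.cons_injective).append (hright.map List.cons_injective) ?_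
    simp only [List.disjoint_left, List.mem_map]
    rintro _ ⟨τ, -, rfl⟩ ⟨τ', -, h'⟩
    exact hVH v (by simp) h (by simp) (List.cons_eq_cons.mp h').1.symm

end Shuffles

lemma isHoriz_eq_not_isVert : isHoriz = fun s => !isVert s :=
  funext fun s => by cases s <;> rfl

lemma mem_shuffles_iff_isShuffle {V H σ : List Step} (hV : ∀ s ∈ V, isVert s = true)
    (hH : ∀ s ∈ H, isHoriz s = true) : σ ∈ shuffles V H ↔ IsShuffle V H σ := by
  simp only [isHoriz_eq_not_isVert, Bool.not_eq_true'] at hH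
  rw [IsShuffle, mem_shuffles_iff hV hH, isHoriz_eq_not_isVert]

lemma nodup_shuffles_of_isVert_of_isHoriz {V H : List Step} (hV : ∀ s ∈ V, isVert s = true)
    (hH : ∀ s ∈ H, isHoriz s = true) : (shuffles V H).Nodup :=
  nodup_shuffles fun v hv h hh hvh => by
    simpa [hvh ▸ hV v hv, isHoriz_eq_not_isVert] using hH h hh

def signedSum (V H : List Step) : ℤ :=
  ((shuffles V H).map fun σ => (-1) ^ peakCount σ).sum

def signedSumAfter (x : Step) (V H : List Step) : ℤ :=
  ((shuffles V H).map fun σ => (-1) ^ peakCount (x :: σ)).sum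

lemma signedSum_cons_cons_eq_signedSumAfter (v h : Step) (V H : List Step) :
    signedSum (v :: V) (h :: H) = signedSumAfter v V (h :: H) + signedSumAfter h (v :: V) H := by
  simp [signedSum, signedSumAfter, shuffles_cons_cons, Function.comp_def]

lemma signedSumAfter_cons_right {x : Step} {V : List Step} (hV : ∀ v ∈ V, peakIndicator x v = 0)
    (h : Step) (H : List Step) :
    signedSumAfter x V (h :: H) = signedSum V (h :: H) - 2 * peakIndicator x h * signedSum V H := by
  cases V with
  | nil => simp [signedSumAfter, signedSum, neg_one_pow_peakCount_cons_cons]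
  | cons v V =>
    simp only [signedSumAfter, signedSum, shuffles_cons_cons, List.map_append, List.sum_append,
      List.map_map, Function.comp_def, neg_one_pow_peakCount_cons_cons, hV v (by simp),
      sub_eq_add_neg, ← neg_mul, List.sum_map_add, List.sum_map_mul_left]
    ring

lemma signedSumAfter_cons_left {x : Step} {H : List Step} (hH : ∀ h ∈ H, peakIndicator x h = 0)
    (v : Step) (V : List Step) :
    signedSumAfter x (v :: V) H = signedSum (v :: V) H - 2 * peakIndicator x v * signedSum V H := by
  cases H with
  | nil => simp [signedSumAfter, signedSum, neg_one_pow_peakCount_cons_cons]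
  | cons h H =>
    simp only [signedSumAfter, signedSum, shuffles_cons_cons, List.map_append, List.sum_append,
      List.map_map, Function.comp_def, neg_one_pow_peakCount_cons_cons, hH h (by simp),
      sub_eq_add_neg, ← neg_mul, List.sum_map_add, List.sum_map_mul_left]
    ring

lemma signedSum_cons_cons {v h : Step} {V H : List Step} (hv : ∀ w ∈ V, peakIndicator v w = 0)
    (hh : ∀ w ∈ H, peakIndicator h w = 0) :
    signedSum (v :: V) (h :: H) = signedSum V (h :: H) + signedSum (v :: V) H -
      2 * (peakIndicator v h + peakIndicator h v) * signedSum V H := by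
  rw [signedSum_cons_cons_eq_signedSumAfter, signedSumAfter_cons_right hv,
    signedSumAfter_cons_left hh]
  ring

lemma isVert_eq_false_of_isHoriz {s : Step} (h : isHoriz s = true) : isVert s = false := by
  cases s <;> simp_all [isVert, isHoriz]

lemma signedSum_eq_signedCount {V H : List Step} (hV : ∀ s ∈ V, isVert s = true)
    (hH : ∀ s ∈ H, isHoriz s = true) :
    signedSum V H = signedCount (V.count N) (V.count S) (H.count E) (H.count W) := by
  induction V generalizing H with
  | nil =>
    rw [signedSum, shuffles_nil_left, List.map_singleton, List.sum_singleton,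
      peakCount_eq_zero_of_forall_isVert_eq fun s hs => isVert_eq_false_of_isHoriz (hH s hs)]
    simpa using (signedCount_zero_zero_left _ _).symm
  | cons v V ihV =>
    obtain ⟨hv, hV'⟩ := List.forall_mem_cons.mp hV
    induction H with
    | nil =>
      rw [signedSum, shuffles_nil_right, List.map_singleton, List.sum_singleton,
        peakCount_eq_zero_of_forall_isVert_eq hV]
      simpa using (signedCount_zero_zero_right _ _).symm
    | cons h H ihH =>
      obtain ⟨hh, hH'⟩ := List.forall_mem_cons.mp hH
      rw [signedSum_cons_cons
          (fun w hw => peakIndicator_eq_zero_of_isVert_eq (by rw [hv, hV' w hw]))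
          (fun w hw => peakIndicator_eq_zero_of_isVert_eq
            (by rw [isVert_eq_false_of_isHoriz hh, isVert_eq_false_of_isHoriz (hH' w hw)])),
        ihV hV' hH, ihH hH', ihV hV' hH']
      cases v <;> cases h <;> simp only [isVert, isHoriz, Bool.false_eq_true] at hv hh <;>
        simp only [List.count_cons_self, ne_eq, reduceCtorEq, not_false_eq_true,
          List.count_cons_of_ne, peakIndicator, Nat.cast_zero, Nat.cast_one, add_zero, zero_add,
          mul_zero, zero_mul, mul_one, sub_zero]
      · exact (signedCount_N_E ..).symm
      · exact (signedCount_N_W ..).symm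
      · exact (signedCount_S_E ..).symm
      · exact (signedCount_S_W ..).symm

lemma ncard_even_sub_ncard_odd {β : Type*} {L : List β} (hL : L.Nodup) (f : β → ℕ) :
    ({x | x ∈ L ∧ Even (f x)}.ncard : ℤ) - {x | x ∈ L ∧ ¬ Even (f x)}.ncard =
      (L.map fun x => (-1) ^ f x).sum := by
  classical
  have hcard (q : β → Prop) [DecidablePred q] :
      {x | x ∈ L ∧ q x}.ncard = (L.toFinset.filter q).card := by
    rw [← Set.ncard_coe_finset]; congr; ext; simp
  rw [hcard, hcard, ← List.sum_toFinset _ hL,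
    ← Finset.sum_filter_add_sum_filter_not _ (fun x => Even (f x)),
    Finset.sum_congr rfl fun x hx => (Finset.mem_filter.1 hx).2.neg_one_pow,
    Finset.sum_congr rfl fun x hx =>
      (Nat.not_even_iff_odd.1 (Finset.mem_filter.1 hx).2).neg_one_pow]
  simp
  ring

/-- **Theorem (super Catalan numbers).**
If `V` has `r` North and `l` South steps and `H` has `r` East and `l` West steps, then the
number of shuffles of `V` and `H` with even peak-count minus the number with odd peak-count
equals the super Catalan number `S(r, l) = (2r)!·(2l)! / (r!·l!·(r+l)!)`. -/
theorem even_sub_odd_peakCount_superCatalan (r l : ℕ) (V H : List Step)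
    (hV : ∀ s ∈ V, isVert s = true)
    (hVu : V.count Step.N = r) (hVd : V.count Step.S = l)
    (hH : ∀ s ∈ H, isHoriz s = true)
    (hHr : H.count Step.E = r) (hHl : H.count Step.W = l) :
    ({σ : List Step | IsShuffle V H σ ∧ Even (peakCount σ)}.ncard : ℚ)
      - ({σ : List Step | IsShuffle V H σ ∧ ¬ Even (peakCount σ)}.ncard : ℚ)
      = ((2 * r).factorial * (2 * l).factorial : ℚ)
          / (r.factorial * l.factorial * (r + l).factorial : ℚ) := by
  simp_rw [← mem_shuffles_iff_isShuffle hV hH]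
  have key : ({σ | σ ∈ shuffles V H ∧ Even (peakCount σ)}.ncard : ℤ) -
      {σ | σ ∈ shuffles V H ∧ ¬ Even (peakCount σ)}.ncard = signedSum V H :=
    ncard_even_sub_ncard_odd (nodup_shuffles_of_isVert_of_isHoriz hV hH) peakCount
  rw [signedSum_eq_signedCount hV hH, hVu, hVd, hHr, hHl] at key
  rw [← superCatalan, ← signedCount_diag, ← key]
  push_cast
  ring
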